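/- arXiv:2512.24961 — 2 statements merged into one kernel-verified Lean document; each statement's English description precedes it below -/
import Mathlib

section
/- Let 𝓗 = (V,H) be a finite loopless undirected hypergraph and let x ≠ y be vertices in the same connected component, each having at least one neighbour. Then the equal-nodes Ollivier–Ricci curvature κ_EN(x,y) equals 1 if and only if x and y are weakly structurally equivalent, i.e. N(x) = N(y). -/
/-!
STATEMENT 11: Let 𝓗 = (V,H) be a finite loopless undirected hypergraph and let
x ≠ y be vertices in the same connected component, each having at least one
neighbour. Then the equal-nodes Ollivier–Ricci curvature κ_EN(x,y) equals 1 if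
and only if x and y are weakly structurally equivalent, i.e. N(x) = N(y).
-/

open Finset

variable {V : Type*}

/-- Two distinct vertices are neighbours in the hypergraph `H` if some hyperedge
contains both. -/
def HNbr (H : Finset (Finset V)) (u v : V) : Prop :=
  u ≠ v ∧ ∃ e ∈ H, u ∈ e ∧ v ∈ e

/-- `IsHPath H u v emptyset vs es` says that the list of vertices `vs` together with
the list of hyperedges `es` forms a path from `u` to `v` in the hypergraph `H`:
consecutive vertices lie in the corresponding hyperedge, and all vertices and
all hyperedges are distinct. -/
def IsHPath (H : Finset (Finset V)) (u v : V)
    (vs : List V) (es : List (Finset V)) : Prop :=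
  vs.length = es.length + 1 ∧
  vs.head? = some u ∧ vs.getLast? = some v ∧
  vs.Nodup ∧ es.Nodup ∧ (∀ e ∈ es, e ∈ H) ∧
  ∀ i < es.length, vs.getD i u ∈ es.getD i ∅ ∧ vs.getD (i + 1) u ∈ es.getD i ∅

/-- There is a path of length `n` between `u` and `v` in the hypergraph `H`. -/
def HPathLen (H : Finset (Finset V)) (n : ℕ) (u v : V) : Prop :=
  ∃ vs es, IsHPath H u v vs es ∧ es.length = n

/-- The shortest-path distance in a hypergraph: the minimum length of a path. -/
noncomputable def hdist (H : Finset (Finset V)) (u v : V) : ℕ :=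
  sInf {n | HPathLen H n u v}

-- The set of neighbours of `x` in the hypergraph `H`, as a finset.
open Classical in
noncomputable def HNbrFinset [Fintype V] (H : Finset (Finset V)) (x : V) :
    Finset V :=
  Finset.univ.filter (fun z => HNbr H x z)

-- The equal-nodes (EN) measure of a vertex `x`: uniform on its neighbours.
open Classical in
noncomputable def muEN [Fintype V] (H : Finset (Finset V)) (x : V) : V → ℝ :=
  fun z => if HNbr H x z then 1 / ((HNbrFinset H x).card : ℝ) else 0

/-- A coupling of two measures `μ` and `ν` on a finite vertex set. -/
def IsCoupling [Fintype V] (μ ν : V → ℝ) (ξ : V → V → ℝ) : Prop :=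
  (∀ u v, 0 ≤ ξ u v) ∧ (∀ u, ∑ v, ξ u v = μ u) ∧ (∀ v, ∑ u, ξ u v = ν v)

/-- The 1-Wasserstein distance between `μ` and `ν` with respect to the distance
function `d`. -/
noncomputable def W1 [Fintype V] (d : V → V → ℝ) (μ ν : V → ℝ) : ℝ :=
  sInf {c | ∃ ξ : V → V → ℝ, IsCoupling μ ν ξ ∧ c = ∑ u, ∑ v, d u v * ξ u v}

/-- The equal-nodes Ollivier–Ricci curvature of a pair of vertices. -/
noncomputable def kappaEN [Fintype V] (H : Finset (Finset V)) (x y : V) : ℝ :=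
  1 - W1 (fun u v => (hdist H u v : ℝ)) (muEN H x) (muEN H y) / (hdist H x y)

/-!
Since `d(x, y) ≥ 1`, the curvature is `1` exactly when `W1(μ_x, μ_y) = 0`. A neighbour of `x` and a
neighbour of `y` lie in the component of `x` and `y`, so distinct points of the two supports are at
distance at least `1` (between different components `hdist` is the junk value `sInf ∅ = 0`). Hence a
coupling costs at least the mass it moves off the diagonal, and this mass bounds `|μ_x z - μ_y z|`
at every `z`. So `W1` vanishes exactly when `μ_x = μ_y`, that is, when `N(x) = N(y)`.
-/

theorem List.getD_eq_getD_of_lt {α : Type*} {l : List α} {i : ℕ} (h : i < l.length) (a b : α) :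
    l.getD i a = l.getD i b := by
  simp [List.getElem?_eq_getElem h]

section Paths

variable {H : Finset (Finset V)} {u v w : V} {vs : List V} {e : Finset V} {es : List (Finset V)}

theorem HNbr.symm (h : HNbr H u v) : HNbr H v u :=
  let ⟨huv, e, he, hu, hv⟩ := h
  ⟨huv.symm, e, he, hv, hu⟩

theorem isHPath_nil_iff : IsHPath H u v vs [] ↔ vs = [u] ∧ u = v := by
  constructor
  · rintro ⟨hlen, hhead, hlast, -⟩
    obtain ⟨a, rfl⟩ := List.length_eq_one_iff.mp hlen
    simp_all
  · rintro ⟨rfl, rfl⟩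
    simp [IsHPath]

theorem isHPath_cons_iff : IsHPath H u v vs (e :: es) ↔ ∃ w vs', vs = u :: vs' ∧ e ∈ H ∧
    u ∈ e ∧ w ∈ e ∧ u ∉ vs' ∧ e ∉ es ∧ IsHPath H w v vs' es := by
  constructor
  · rintro ⟨hlen, hhead, hlast, hvs, hes, hH, hadj⟩
    match vs, hlen with
    | a :: b :: rest, hlen =>
      obtain rfl : a = u := by simpa using hhead
      have hlen : rest.length = es.length := by simpa using hlen
      obtain ⟨hu, hvs⟩ := List.nodup_cons.mp hvs
      obtain ⟨he, hes⟩ := List.nodup_cons.mp hes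
      refine ⟨b, b :: rest, rfl, hH e (by simp), by simpa using (hadj 0 (by simp)).1,
        by simpa using (hadj 0 (by simp)).2, hu, he, by simp [hlen], rfl, by simpa using hlast,
        hvs, hes, fun f hf => hH f (by simp [hf]), fun i hi => ?_⟩
      have h := hadj (i + 1) (by simpa using hi)
      simp only [List.getD_cons_succ] at h ⊢
      rwa [List.getD_eq_getD_of_lt (l := b :: rest) (by simp; omega) b a,
        List.getD_eq_getD_of_lt (l := rest) (by omega) b a]
  · rintro ⟨w, vs', rfl, he, hue, hwe, hu, hne, hlen, hhead, hlast, hvs, hes, hH, hadj⟩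
    obtain ⟨rest, rfl⟩ : ∃ rest, vs' = w :: rest := by
      cases vs' with
      | nil => simp at hlen
      | cons a rest => exact ⟨rest, by simpa using hhead⟩
    refine ⟨by simpa using hlen, rfl, by simpa using hlast, List.nodup_cons.mpr ⟨hu, hvs⟩,
      List.nodup_cons.mpr ⟨hne, hes⟩, by simpa [he] using hH, fun i hi => ?_⟩
    cases i with
    | zero => simpa using ⟨hue, hwe⟩
    | succ i =>
      have h := hadj i (by simpa using hi)
      simp only [List.getD_cons_succ]
      simp only [List.length_cons] at hlen hi
      rwa [List.getD_eq_getD_of_lt (l := w :: rest) (by simp; omega) u w,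
        List.getD_eq_getD_of_lt (l := rest) (by omega) u w]

namespace IsHPath

theorem head_mem (hp : IsHPath H u v vs es) : u ∈ vs :=
  List.mem_of_mem_head? hp.2.1

theorem reflTransGen (hp : IsHPath H u v vs es) : Relation.ReflTransGen (HNbr H) u v := by
  induction es generalizing u vs with
  | nil => obtain ⟨-, rfl⟩ := isHPath_nil_iff.mp hp; rfl
  | cons e es ih =>
    obtain ⟨w, vs', -, he, hue, hwe, hu, -, hp'⟩ := isHPath_cons_iff.mp hp
    exact .head ⟨fun huw => hu (huw ▸ hp'.head_mem), e, he, hue, hwe⟩ (ih hp')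

theorem exists_mem_of_mem_edges (hp : IsHPath H u v vs es) (he : e ∈ es) : ∃ t ∈ vs, t ∈ e := by
  induction es generalizing u vs with
  | nil => simp at he
  | cons f es ih =>
    obtain ⟨w, vs', rfl, -, hue, -, -, -, hp'⟩ := isHPath_cons_iff.mp hp
    rcases List.mem_cons.mp he with rfl | he
    · exact ⟨u, List.mem_cons_self, hue⟩
    · obtain ⟨t, ht, hte⟩ := ih hp' he
      exact ⟨t, List.mem_cons_of_mem _ ht, hte⟩

-- Enter the path at the last of its vertices lying in `e`: then neither `u` nor `e` occurs again.
theorem exists_isHPath_of_mem_edge {t : V} (hp : IsHPath H w v vs es) (he : e ∈ H) (hue : u ∈ e)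
    (ht : t ∈ vs) (hte : t ∈ e) (huv : u ≠ v) : ∃ vs' es', IsHPath H u v vs' es' := by
  induction es generalizing w vs t with
  | nil =>
    obtain ⟨rfl, rfl⟩ := isHPath_nil_iff.mp hp
    obtain rfl : t = w := by simpa using ht
    exact ⟨_, _, isHPath_cons_iff.mpr ⟨t, [t], rfl, he, hue, hte, by simpa using huv, by simp, hp⟩⟩
  | cons f es ih =>
    obtain ⟨w', vs', rfl, hf, hwf, hw'f, hwvs', hfes, hp'⟩ := isHPath_cons_iff.mp hp
    by_cases hlater : ∃ s ∈ vs', s ∈ e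
    · obtain ⟨s, hs, hse⟩ := hlater
      exact ih hp' hs hse
    push Not at hlater
    by_cases huw : u = w
    · exact ⟨_, _, huw ▸ hp⟩
    have hwe : w ∈ e := by
      rcases List.mem_cons.mp ht with rfl | ht
      · exact hte
      · exact absurd hte (hlater t ht)
    have hef : e ∉ f :: es := by
      rintro (_ | ⟨_, hees⟩)
      · exact hlater w' hp'.head_mem hw'f
      · obtain ⟨s, hs, hse⟩ := hp'.exists_mem_of_mem_edges hees
        exact hlater s hs hse
    refine ⟨_, _, isHPath_cons_iff.mpr ⟨w, _, rfl, he, hue, hwe, ?_, hef, hp⟩⟩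
    rintro (_ | ⟨_, hu⟩)
    · exact huw rfl
    · exact hlater u hu hue

end IsHPath

theorem exists_isHPath_of_reflTransGen (h : Relation.ReflTransGen (HNbr H) u v) :
    ∃ vs es, IsHPath H u v vs es := by
  induction h using Relation.ReflTransGen.head_induction_on with
  | refl => exact ⟨[v], [], isHPath_nil_iff.mpr ⟨rfl, rfl⟩⟩
  | @head a c hac _ ih =>
    obtain ⟨-, e, he, hae, hce⟩ := hac
    obtain ⟨vs, es, hp⟩ := ih
    by_cases hav : a = v
    · exact ⟨[a], [], isHPath_nil_iff.mpr ⟨rfl, hav⟩⟩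
    · exact hp.exists_isHPath_of_mem_edge he hae hp.head_mem hce hav

theorem exists_hPathLen_iff_reflTransGen :
    (∃ n, HPathLen H n u v) ↔ Relation.ReflTransGen (HNbr H) u v :=
  ⟨fun ⟨_, _, _, hp, _⟩ => hp.reflTransGen, fun h =>
    let ⟨vs, es, hp⟩ := exists_isHPath_of_reflTransGen h
    ⟨_, vs, es, hp, rfl⟩⟩

theorem hdist_self (H : Finset (Finset V)) (u : V) : hdist H u u = 0 :=
  Nat.sInf_eq_zero.mpr (Or.inl ⟨[u], [], isHPath_nil_iff.mpr ⟨rfl, rfl⟩, rfl⟩)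

theorem hdist_pos (huv : u ≠ v) (h : ∃ n, HPathLen H n u v) : 0 < hdist H u v := by
  obtain ⟨vs, es, hp, hlen⟩ : HPathLen H (hdist H u v) u v := Nat.sInf_mem h
  refine Nat.pos_of_ne_zero fun h0 => huv ?_
  rw [h0, List.length_eq_zero_iff] at hlen
  subst hlen
  exact (isHPath_nil_iff.mp hp).2

theorem hdist_pos_of_hNbr {x y a b : V} (hxy : ∃ n, HPathLen H n x y) (ha : HNbr H x a)
    (hb : HNbr H y b) (hab : a ≠ b) : 0 < hdist H a b :=
  hdist_pos hab <| exists_hPathLen_iff_reflTransGen.mpr <|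
    .head ha.symm ((exists_hPathLen_iff_reflTransGen.mp hxy).tail hb)

end Paths

section Wasserstein

variable [Fintype V] {d : V → V → ℝ} {μ ν : V → ℝ} {ξ : V → V → ℝ}

theorem IsCoupling.swap (hξ : IsCoupling μ ν ξ) : IsCoupling ν μ (fun v u => ξ u v) :=
  ⟨fun v u => hξ.1 u v, hξ.2.2, hξ.2.1⟩

theorem IsCoupling.cost_nonneg (hξ : IsCoupling μ ν ξ) (hd0 : ∀ u v, 0 ≤ d u v) :
    0 ≤ ∑ u, ∑ v, d u v * ξ u v :=
  sum_nonneg fun u _ => sum_nonneg fun v _ => mul_nonneg (hd0 u v) (hξ.1 u v)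
theorem IsCoupling.sub_le_cost (hξ : IsCoupling μ ν ξ) (hd0 : ∀ u v, 0 ≤ d u v)
    (hd1 : ∀ u v, u ≠ v → μ u ≠ 0 → ν v ≠ 0 → 1 ≤ d u v) (z : V) :
    μ z - ν z ≤ ∑ u, ∑ v, d u v * ξ u v := by
  classical
  obtain ⟨hξ0, hrow, hcol⟩ := hξ
  have hmoved : ∀ v, v ≠ z → ξ z v ≤ d z v * ξ z v := by
    intro v hvz
    rcases (hξ0 z v).eq_or_lt with h0 | hpos
    · simp [← h0]
    have hμ : μ z ≠ 0 :=
      (hpos.trans_le (hrow z ▸ single_le_sum (fun w _ => hξ0 z w) (mem_univ v))).ne'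
    have hν : ν v ≠ 0 :=
      (hpos.trans_le (hcol v ▸ single_le_sum (fun w _ => hξ0 w v) (mem_univ z))).ne'
    exact le_mul_of_one_le_left hpos.le (hd1 z v hvz.symm hμ hν)
  calc μ z - ν z ≤ ∑ v, ξ z v - ξ z z := by
        rw [← hrow z, ← hcol z]
        gcongr
        exact single_le_sum (fun u _ => hξ0 u z) (mem_univ z)
    _ = ∑ v ∈ univ.erase z, ξ z v := by rw [← sum_erase_add _ _ (mem_univ z), add_sub_cancel_right]
    _ ≤ ∑ v ∈ univ.erase z, d z v * ξ z v := sum_le_sum fun v hv => hmoved v (ne_of_mem_erase hv)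
    _ ≤ ∑ v, d z v * ξ z v := sum_le_sum_of_subset_of_nonneg (erase_subset _ _)
          fun v _ _ => mul_nonneg (hd0 z v) (hξ0 z v)
    _ ≤ ∑ u, ∑ v, d u v * ξ u v := single_le_sum (f := fun u => ∑ v, d u v * ξ u v)
          (fun u _ => sum_nonneg fun v _ => mul_nonneg (hd0 u v) (hξ0 u v)) (mem_univ z)

theorem IsCoupling.abs_sub_le_cost (hξ : IsCoupling μ ν ξ) (hd0 : ∀ u v, 0 ≤ d u v)
    (hd1 : ∀ u v, u ≠ v → μ u ≠ 0 → ν v ≠ 0 → 1 ≤ d u v) (z : V) :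
    |μ z - ν z| ≤ ∑ u, ∑ v, d u v * ξ u v := by
  refine abs_sub_le_iff.mpr ⟨hξ.sub_le_cost hd0 hd1 z, ?_⟩
  have h := hξ.swap.sub_le_cost (d := fun v u => d u v) (fun v u => hd0 u v)
    (fun v u hvu hν hμ => hd1 u v hvu.symm hμ hν) z
  rwa [sum_comm] at h

theorem isCoupling_mul (hμ0 : ∀ u, 0 ≤ μ u) (hν0 : ∀ v, 0 ≤ ν v) (hμ1 : ∑ u, μ u = 1)
    (hν1 : ∑ v, ν v = 1) : IsCoupling μ ν (fun u v => μ u * ν v) :=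
  ⟨fun u v => mul_nonneg (hμ0 u) (hν0 v), fun u => by rw [← mul_sum, hν1, mul_one],
    fun v => by rw [← sum_mul, hμ1, one_mul]⟩

theorem isCoupling_diagonal [DecidableEq V] (hμ0 : ∀ u, 0 ≤ μ u) :
    IsCoupling μ μ (fun u v => if u = v then μ u else 0) :=
  ⟨fun u _ => ite_nonneg (hμ0 u) le_rfl, fun u => by simp, fun v => by simp⟩

theorem abs_sub_le_W1 (hc : ∃ ξ, IsCoupling μ ν ξ) (hd0 : ∀ u v, 0 ≤ d u v)
    (hd1 : ∀ u v, u ≠ v → μ u ≠ 0 → ν v ≠ 0 → 1 ≤ d u v) (z : V) : |μ z - ν z| ≤ W1 d μ ν :=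
  let ⟨ξ, hξ⟩ := hc
  le_csInf ⟨_, ξ, hξ, rfl⟩ fun _ ⟨_, hξ, hc⟩ => hc ▸ hξ.abs_sub_le_cost hd0 hd1 z

theorem W1_self (hμ0 : ∀ u, 0 ≤ μ u) (hd0 : ∀ u v, 0 ≤ d u v) (hdd : ∀ u, d u u = 0) :
    W1 d μ μ = 0 := by
  classical
  have hzero : (0 : ℝ) ∈ {c | ∃ ξ, IsCoupling μ μ ξ ∧ c = ∑ u, ∑ v, d u v * ξ u v} :=
    ⟨_, isCoupling_diagonal hμ0, by simp [hdd]⟩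
  have hlower : ∀ c ∈ {c | ∃ ξ, IsCoupling μ μ ξ ∧ c = ∑ u, ∑ v, d u v * ξ u v}, 0 ≤ c :=
    fun _ ⟨ξ, hξ, hc⟩ => hc ▸ hξ.cost_nonneg hd0
  exact le_antisymm (csInf_le ⟨0, hlower⟩ hzero) (le_csInf ⟨0, hzero⟩ hlower)

theorem W1_eq_zero_iff (hμ0 : ∀ u, 0 ≤ μ u) (hν0 : ∀ v, 0 ≤ ν v) (hμ1 : ∑ u, μ u = 1)
    (hν1 : ∑ v, ν v = 1) (hd0 : ∀ u v, 0 ≤ d u v) (hdd : ∀ u, d u u = 0)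
    (hd1 : ∀ u v, u ≠ v → μ u ≠ 0 → ν v ≠ 0 → 1 ≤ d u v) : W1 d μ ν = 0 ↔ μ = ν := by
  refine ⟨fun h => funext fun z => ?_, fun h => h ▸ W1_self hμ0 hd0 hdd⟩
  have hz := abs_sub_le_W1 ⟨_, isCoupling_mul hμ0 hν0 hμ1 hν1⟩ hd0 hd1 z
  rw [h] at hz
  exact sub_eq_zero.mp (abs_nonpos_iff.mp hz)

end Wasserstein

section muEN

variable [Fintype V] {H : Finset (Finset V)} {x y z : V}

theorem mem_hNbrFinset : z ∈ HNbrFinset H x ↔ HNbr H x z := by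
  classical
  simp [HNbrFinset]

theorem muEN_nonneg (H : Finset (Finset V)) (x z : V) : 0 ≤ muEN H x z := by
  unfold muEN
  split_ifs <;> positivity

theorem muEN_ne_zero_iff : muEN H x z ≠ 0 ↔ HNbr H x z := by
  by_cases h : HNbr H x z
  · have hcard : 0 < #(HNbrFinset H x) := card_pos.mpr ⟨z, mem_hNbrFinset.mpr h⟩
    simp [muEN, h, hcard.ne']
  · simp [muEN, h]

theorem sum_muEN (hx : ∃ z, HNbr H x z) : ∑ z, muEN H x z = 1 := by
  classical
  obtain ⟨z, hz⟩ := hx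
  have hcard : 0 < #(HNbrFinset H x) := card_pos.mpr ⟨z, mem_hNbrFinset.mpr hz⟩
  simp only [muEN]
  rw [sum_ite, sum_const_zero, add_zero, sum_const, nsmul_eq_mul]
  exact mul_one_div_cancel (Nat.cast_ne_zero.mpr hcard.ne')

theorem muEN_eq_muEN_iff : muEN H x = muEN H y ↔ ∀ z, HNbr H x z ↔ HNbr H y z := by
  refine ⟨fun h z => by rw [← muEN_ne_zero_iff, ← muEN_ne_zero_iff, h], fun h => ?_⟩
  have hN : HNbr H x = HNbr H y := funext fun z => propext (h z)
  unfold muEN HNbrFinset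
  rw [hN]

end muEN

theorem kappaEN_eq_one_iff [Fintype V] {H : Finset (Finset V)} {x y : V} (h : 0 < hdist H x y) :
    kappaEN H x y = 1 ↔ W1 (fun u v => (hdist H u v : ℝ)) (muEN H x) (muEN H y) = 0 := by
  rw [kappaEN, sub_eq_self, div_eq_zero_iff]
  simp [h.ne']

theorem stmt11_general [Fintype V] (H : Finset (Finset V))
    (x y : V) (hxy : x ≠ y)
    (hcomp : ∃ n, HPathLen H n x y)
    (hx : ∃ z, HNbr H x z) (hy : ∃ z, HNbr H y z) :
    kappaEN H x y = 1 ↔ (∀ z, HNbr H x z ↔ HNbr H y z) := by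
  rw [kappaEN_eq_one_iff (hdist_pos hxy hcomp), W1_eq_zero_iff (muEN_nonneg H x)
    (muEN_nonneg H y) (sum_muEN hx) (sum_muEN hy) (fun _ _ => Nat.cast_nonneg _)
    (fun u => by simp [hdist_self]) ?_, muEN_eq_muEN_iff]
  intro u v huv hu hv
  exact Nat.one_le_cast.mpr
    (hdist_pos_of_hNbr hcomp (muEN_ne_zero_iff.mp hu) (muEN_ne_zero_iff.mp hv) huv)

theorem stmt11 [Fintype V] (H : Finset (Finset V))
    (hloopless : ∀ e ∈ H, 2 ≤ e.card)
    (x y : V) (hxy : x ≠ y)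
    (hcomp : ∃ n, HPathLen H n x y)
    (hx : ∃ z, HNbr H x z) (hy : ∃ z, HNbr H y z) :
    kappaEN H x y = 1 ↔ (∀ z, HNbr H x z ↔ HNbr H y z) :=
  stmt11_general H x y hxy hcomp hx hy
end

section
/- Let G be a finite connected simple graph with at least two vertices and let x ≠ y be vertices of G. Let η denote the number of common neighbours of x and y. Then the Ollivier–Ricci curvature satisfies the lower bound κ(x,y) ≥ 3·η/max(deg(x), deg(y)) − 2. -/
open Finset

variable {V : Type*}

/-- The neighbour measure of a vertex `x`: mass `1/deg(x)` on each neighbour. -/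
noncomputable def nbrMeasure [Fintype V] (G : SimpleGraph V) [DecidableRel G.Adj]
    (x : V) : V → ℝ :=
  fun z => if G.Adj x z then 1 / (G.degree x : ℝ) else 0

/-- The Ollivier–Ricci curvature of a pair of vertices, computed with the
shortest-path distance of `G`. -/
noncomputable def orc [Fintype V] (G : SimpleGraph V) [DecidableRel G.Adj]
    (x y : V) : ℝ :=
  1 - W1 (fun u v => (G.dist u v : ℝ)) (nbrMeasure G x) (nbrMeasure G y) / (G.dist x y)

/-- The number of common neighbours of two vertices. -/
def commonNbrs [Fintype V] [DecidableEq V] (G : SimpleGraph V)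
    [DecidableRel G.Adj] (x y : V) : ℕ :=
  (G.neighborFinset x ∩ G.neighborFinset y).card

/-!
Let `M = ∑ min (μ_x, μ_y)` be the mass the two neighbour measures share; a common neighbour
carries at least `1 / max (deg x, deg y)` of it, so `M ≥ η / max (deg x, deg y)`. Leaving the
shared mass in place and spreading the remaining `1 - M` of `μ_x` (supported on `N(x)`) over
that of `μ_y` (supported on `N(y)`) costs at most `d(x,y) + 2` per unit, so
`W1 ≤ (d(x,y) + 2)(1 - M) ≤ 3 d(x,y)(1 - M)` and `κ(x,y) ≥ 3M - 2`.
-/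

section Transport

variable [Fintype V]

lemma W1_le_of_isCoupling {d : V → V → ℝ} (hd : ∀ u v, 0 ≤ d u v) {μ ν : V → ℝ}
    {ξ : V → V → ℝ} (h : IsCoupling μ ν ξ) : W1 d μ ν ≤ ∑ u, ∑ v, d u v * ξ u v := by
  refine csInf_le ⟨0, ?_⟩ ⟨ξ, h, rfl⟩
  rintro c ⟨ξ', hξ', rfl⟩
  exact sum_nonneg fun u _ => sum_nonneg fun v _ => mul_nonneg (hd u v) (hξ'.1 u v)

lemma IsCoupling.add {μ₁ ν₁ μ₂ ν₂ : V → ℝ} {ξ₁ ξ₂ : V → V → ℝ} (h₁ : IsCoupling μ₁ ν₁ ξ₁)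
    (h₂ : IsCoupling μ₂ ν₂ ξ₂) : IsCoupling (μ₁ + μ₂) (ν₁ + ν₂) (ξ₁ + ξ₂) :=
  ⟨fun u v => add_nonneg (h₁.1 u v) (h₂.1 u v),
    fun u => by simp [sum_add_distrib, h₁.2.1, h₂.2.1],
    fun v => by simp [sum_add_distrib, h₁.2.2, h₂.2.2]⟩

lemma isCoupling_diag [DecidableEq V] {m : V → ℝ} (hm : ∀ u, 0 ≤ m u) :
    IsCoupling m m (fun u v => if u = v then m u else 0) :=
  ⟨fun u v => by dsimp only; split_ifs <;> simp [hm], fun u => by simp, fun v => by simp⟩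

lemma isCoupling_prod {α β : V → ℝ} (hα : ∀ u, 0 ≤ α u) (hβ : ∀ v, 0 ≤ β v)
    (hsum : ∑ u, α u = ∑ v, β v) :
    IsCoupling α β (fun u v => α u * β v / ∑ w, β w) := by
  refine ⟨fun u v => div_nonneg (mul_nonneg (hα u) (hβ v)) (sum_nonneg fun w _ => hβ w),
    fun u => ?_, fun v => ?_⟩
  all_goals
    rw [← sum_div]
    rcases eq_or_ne (∑ w, β w) 0 with hzero | hne
    · have hα0 := (sum_eq_zero_iff_of_nonneg fun w _ => hα w).1 (hsum.trans hzero)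
      have hβ0 := (sum_eq_zero_iff_of_nonneg fun w _ => hβ w).1 hzero
      simp [hα0, hβ0]
  · rw [← mul_sum, mul_div_cancel_right₀ _ hne]
  · rw [← sum_mul, hsum, mul_div_cancel_left₀ _ hne]

theorem W1_le_mul_sum_sub_min {d : V → V → ℝ} (hd : ∀ u v, 0 ≤ d u v)
    (hdiag : ∀ u, d u u = 0) {μ ν : V → ℝ} (hμ : ∀ u, 0 ≤ μ u) (hν : ∀ v, 0 ≤ ν v)
    (hsum : ∑ u, μ u = ∑ v, ν v) {C : ℝ} (hC : ∀ u v, 0 < μ u → 0 < ν v → d u v ≤ C) :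
    W1 d μ ν ≤ C * ∑ u, (μ u - min (μ u) (ν u)) := by
  classical
  set m : V → ℝ := fun u => min (μ u) (ν u)
  set α : V → ℝ := fun u => μ u - m u
  set β : V → ℝ := fun v => ν v - m v
  have hm : ∀ u, 0 ≤ m u := fun u => le_min (hμ u) (hν u)
  have hα : ∀ u, 0 ≤ α u := fun u => sub_nonneg.2 (min_le_left _ _)
  have hβ : ∀ v, 0 ≤ β v := fun v => sub_nonneg.2 (min_le_right _ _)
  have hαβ : ∑ u, α u = ∑ v, β v := by simp only [α, β, sum_sub_distrib, hsum]
  have hcoup := (isCoupling_diag hm).add (isCoupling_prod hα hβ hαβ)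
  rw [show m + α = μ by ext; simp [α], show m + β = ν by ext; simp [β]] at hcoup
  refine (W1_le_of_isCoupling hd hcoup).trans ?_
  have hterm : ∀ u v, d u v * ((if u = v then m u else 0) + α u * β v / ∑ w, β w) ≤
      C * (α u * β v / ∑ w, β w) := by
    intro u v
    have hdiag_cost : d u v * (if u = v then m u else 0) = 0 := by
      split_ifs with h
      · rw [h, hdiag, zero_mul]
      · rw [mul_zero]
    rw [mul_add, hdiag_cost, zero_add]
    rcases (hα u).eq_or_lt with hαu | hαu
    · simp [← hαu]
    rcases (hβ v).eq_or_lt with hβv | hβv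
    · simp [← hβv]
    refine mul_le_mul_of_nonneg_right (hC u v ?_ ?_) ?_
    · linarith [hm u]
    · linarith [hm v]
    · exact div_nonneg (mul_nonneg hαu.le hβv.le) (sum_nonneg fun w _ => hβ w)
  calc ∑ u, ∑ v, d u v * ((if u = v then m u else 0) + α u * β v / ∑ w, β w)
      ≤ ∑ u, ∑ v, C * (α u * β v / ∑ w, β w) :=
        sum_le_sum fun u _ => sum_le_sum fun v _ => hterm u v
    _ = C * ∑ u, α u := by
        simp_rw [← mul_sum, ← sum_div, ← sum_mul_sum, hαβ, mul_self_div_self]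

end Transport

section NeighbourMeasure

variable [Fintype V] (G : SimpleGraph V) [DecidableRel G.Adj]

lemma nbrMeasure_nonneg (x u : V) : 0 ≤ nbrMeasure G x u := by
  unfold nbrMeasure; positivity

lemma adj_of_nbrMeasure_pos {x u : V} (h : 0 < nbrMeasure G x u) : G.Adj x u := by
  by_contra hxu
  simp [nbrMeasure, hxu] at h

lemma sum_nbrMeasure {x : V} (hx : 0 < G.degree x) : ∑ u, nbrMeasure G x u = 1 := by
  have hx' : (G.degree x : ℝ) ≠ 0 := by positivity
  simp [nbrMeasure, ← sum_filter, ← SimpleGraph.neighborFinset_eq_filter, hx']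

lemma div_max_degree_le_sum_min_nbrMeasure [DecidableEq V] (x y : V) :
    (commonNbrs G x y : ℝ) / max (G.degree x : ℝ) (G.degree y) ≤
      ∑ u, min (nbrMeasure G x u) (nbrMeasure G y u) := by
  have hle : ∀ {w : V} (u : V), G.Adj w u → G.degree w ≤ max (G.degree x : ℝ) (G.degree y) →
      1 / max (G.degree x : ℝ) (G.degree y) ≤ nbrMeasure G w u := fun u hu hw => by
    rw [nbrMeasure, if_pos hu]
    exact one_div_le_one_div_of_le (mod_cast hu.degree_pos_left) hw
  calc (commonNbrs G x y : ℝ) / max (G.degree x : ℝ) (G.degree y)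
      = ∑ _u ∈ G.neighborFinset x ∩ G.neighborFinset y,
          1 / max (G.degree x : ℝ) (G.degree y) := by
        simp [commonNbrs, div_eq_mul_inv]
    _ ≤ ∑ u ∈ G.neighborFinset x ∩ G.neighborFinset y,
          min (nbrMeasure G x u) (nbrMeasure G y u) :=
        sum_le_sum fun u hu => by
          rw [mem_inter, SimpleGraph.mem_neighborFinset, SimpleGraph.mem_neighborFinset] at hu
          exact le_min (hle u hu.1 (le_max_left _ _)) (hle u hu.2 (le_max_right _ _))
    _ ≤ ∑ u, min (nbrMeasure G x u) (nbrMeasure G y u) :=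
        sum_le_sum_of_subset_of_nonneg (subset_univ _) fun u _ _ =>
          le_min (nbrMeasure_nonneg G x u) (nbrMeasure_nonneg G y u)

end NeighbourMeasure

lemma SimpleGraph.Connected.dist_le_add_two_of_adj {G : SimpleGraph V} (hconn : G.Connected)
    {x y u v : V} (hu : G.Adj x u) (hv : G.Adj y v) : G.dist u v ≤ G.dist x y + 2 := by
  have hux : G.dist u x = 1 := SimpleGraph.dist_eq_one_iff_adj.2 hu.symm
  have hyv : G.dist y v = 1 := SimpleGraph.dist_eq_one_iff_adj.2 hv
  have := hconn.dist_triangle (u := u) (v := x) (w := y)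
  have := hconn.dist_triangle (u := u) (v := y) (w := v)
  omega

lemma W1_nbrMeasure_le [Fintype V] {G : SimpleGraph V} [DecidableRel G.Adj]
    (hconn : G.Connected) {x y : V} (hx : 0 < G.degree x) (hy : 0 < G.degree y) :
    W1 (fun u v => (G.dist u v : ℝ)) (nbrMeasure G x) (nbrMeasure G y) ≤
      (G.dist x y + 2) * (1 - ∑ u, min (nbrMeasure G x u) (nbrMeasure G y u)) := by
  have h := W1_le_mul_sum_sub_min (d := fun u v => (G.dist u v : ℝ)) (C := G.dist x y + 2)
    (fun u v => by positivity) (fun u => by simp) (nbrMeasure_nonneg G x) (nbrMeasure_nonneg G y)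
    (by rw [sum_nbrMeasure G hx, sum_nbrMeasure G hy]) fun u v hu hv => by
      exact_mod_cast hconn.dist_le_add_two_of_adj (adj_of_nbrMeasure_pos G hu)
        (adj_of_nbrMeasure_pos G hv)
  rwa [sum_sub_distrib, sum_nbrMeasure G hx] at h

lemma three_mul_sum_min_nbrMeasure_sub_two_le_orc [Fintype V] {G : SimpleGraph V}
    [DecidableRel G.Adj] (hconn : G.Connected) {x y : V} (hxy : x ≠ y) :
    3 * ∑ u, min (nbrMeasure G x u) (nbrMeasure G y u) - 2 ≤ orc G x y := by
  have : Nontrivial V := ⟨x, y, hxy⟩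
  have hdeg (v : V) : 0 < G.degree v :=
    (G.degree_pos_iff_exists_adj v).2 (hconn.preconnected.exists_adj_of_nontrivial v)
  set M := ∑ u, min (nbrMeasure G x u) (nbrMeasure G y u)
  have hM : M ≤ 1 :=
    (sum_le_sum fun u _ => min_le_left _ _).trans (sum_nbrMeasure G (hdeg x)).le
  have hW := W1_nbrMeasure_le hconn (hdeg x) (hdeg y)
  have ht : (1 : ℝ) ≤ G.dist x y := mod_cast hconn.pos_dist_of_ne hxy
  have hW' : W1 (fun u v => (G.dist u v : ℝ)) (nbrMeasure G x) (nbrMeasure G y) / G.dist x y ≤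
      3 * (1 - M) := by
    rw [div_le_iff₀ (by linarith)]
    nlinarith
  rw [orc]
  linarith

theorem stmt18_general [Fintype V] [DecidableEq V] (G : SimpleGraph V)
    [DecidableRel G.Adj] (hconn : G.Connected)
    (x y : V) (hxy : x ≠ y) :
    3 * (commonNbrs G x y : ℝ) / (max (G.degree x) (G.degree y) : ℝ) - 2 ≤
      orc G x y := by
  rw [mul_div_assoc]
  linarith [div_max_degree_le_sum_min_nbrMeasure G x y,
    three_mul_sum_min_nbrMeasure_sub_two_le_orc hconn hxy]

theorem stmt18 [Fintype V] [DecidableEq V] (G : SimpleGraph V)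
    [DecidableRel G.Adj] (hconn : G.Connected) (hcard : 2 ≤ Fintype.card V)
    (x y : V) (hxy : x ≠ y) :
    3 * (commonNbrs G x y : ℝ) / (max (G.degree x) (G.degree y) : ℝ) - 2 ≤
      orc G x y :=
  stmt18_general G hconn x y hxy
end
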